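/- Let N be a deterministic non-erasing Turing machine with a single binary tape that halts in time t on some input. Then there is a Wang B machine W_N, and a constant c depending only on N, such that W_N started from the encoding of N's initial configuration halts in at most c·t + c steps, with its final tape encoding N's final tape contents. -/

import Mathlib

inductive WInstr : Type
  | L : WInstr
  | R : WInstr
  | M : WInstr
  | J : ℕ → WInstr
  deriving DecidableEq

/-- A configuration of a Wang B machine: instruction pointer, head position, tape. -/
structure WCfg : Type where
  ip : ℕ
  pos : ℤ
  tape : ℤ → Bool

/-- One step of a Wang B machine with program `P`.  If the instruction pointer has
passed beyond the last instruction the machine has halted and the step does nothing. -/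
def wStep (P : List WInstr) (c : WCfg) : WCfg :=
  match P[c.ip]? with
  | none => c
  | some WInstr.L => ⟨c.ip + 1, c.pos - 1, c.tape⟩
  | some WInstr.R => ⟨c.ip + 1, c.pos + 1, c.tape⟩
  | some WInstr.M => ⟨c.ip + 1, c.pos, Function.update c.tape c.pos true⟩
  | some (WInstr.J x) =>
      if c.tape c.pos then ⟨x, c.pos, c.tape⟩ else ⟨c.ip + 1, c.pos, c.tape⟩

/-- A configuration of a single-tape binary Turing machine (states are naturals). -/
structure TMCfg : Type where
  q : ℕ
  pos : ℤ
  tape : ℤ → Bool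

/-- One step of the binary Turing machine with transition function `f`;
`f q r = some (w, d, q')` means: in state `q` reading `r`, write `w`, move right
if `d = true` (left if `d = false`), and enter state `q'`.  `f q r = none` means
the machine is halted. -/
def tmStep (f : ℕ → Bool → Option (Bool × Bool × ℕ)) (c : TMCfg) : TMCfg :=
  match f c.q (c.tape c.pos) with
  | none => c
  | some (w, d, q') =>
      ⟨q', if d then c.pos + 1 else c.pos - 1, Function.update c.tape c.pos w⟩

/-- A binary Turing machine is non-erasing if no rule overwrites 1 with 0. -/
def NonErasing (f : ℕ → Bool → Option (Bool × Bool × ℕ)) : Prop :=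
  ∀ q d q', f q true ≠ some (false, d, q')

/-- The machine is halted in configuration `c`. -/
def TMHalted (f : ℕ → Bool → Option (Bool × Bool × ℕ)) (c : TMCfg) : Prop :=
  f c.q (c.tape c.pos) = none

/-- Equation (2): the instruction sequence `⟨TR_{q_i,0}⟩` encoding the transition rule
for reading 0 (direction `true` is right, `false` is left). -/
def encTR0 (r : Option (Bool × Bool × ℕ)) : List WInstr :=
  match r with
  | some (false, true, j)  => [WInstr.R, WInstr.M, WInstr.M, WInstr.M, WInstr.M, WInstr.J (13 * j)]
  | some (false, false, j) => [WInstr.L, WInstr.L, WInstr.L, WInstr.M, WInstr.M, WInstr.J (13 * j)]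
  | some (true, true, j)   => [WInstr.M, WInstr.R, WInstr.M, WInstr.M, WInstr.M, WInstr.J (13 * j)]
  | some (true, false, j)  => [WInstr.M, WInstr.L, WInstr.L, WInstr.L, WInstr.M, WInstr.J (13 * j)]
  | none => [WInstr.M, WInstr.M, WInstr.M, WInstr.M, WInstr.M, WInstr.M]

/-- Equation (3): the instruction sequence `⟨TR_{q_i,1}⟩` encoding the transition rule
for reading 1 (non-erasing, so the written symbol is again 1). -/
def encTR1 (r : Option (Bool × Bool × ℕ)) : List WInstr :=
  match r with
  | some (_, true, j)  => [WInstr.R, WInstr.M, WInstr.M, WInstr.M, WInstr.J (13 * j)]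
  | some (_, false, j) => [WInstr.L, WInstr.L, WInstr.L, WInstr.M, WInstr.J (13 * j)]
  | none => [WInstr.M, WInstr.M, WInstr.M, WInstr.M, WInstr.M]

/-- Equation (1): the Wang B machine `W_N` encoding the non-erasing Turing machine
with `m` states (halt state `m - 1`) and transition function `f`. -/
def wangOf (m : ℕ) (f : ℕ → Bool → Option (Bool × Bool × ℕ)) : List WInstr :=
  ((List.range (m - 1)).map (fun i =>
    [WInstr.R, WInstr.J (13 * i + 8)] ++ encTR0 (f i false) ++ encTR1 (f i true))).flatten
    ++ [WInstr.M]

/-- The Wang tape `w` encodes the Turing tape `t`: Turing cell `k` is represented by the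
pair of Wang cells `2k, 2k+1`, holding `10` if `t k = 0` and `11` if `t k = 1`;
still-blank pairs `00` (converted on demand during the simulation) may only represent 0. -/
def EncTape (t w : ℤ → Bool) : Prop :=
  ∀ k : ℤ, (w (2 * k) = true ∧ w (2 * k + 1) = t k) ∨
    (w (2 * k) = false ∧ w (2 * k + 1) = false ∧ t k = false)

/-- The Wang configuration `wc` encodes the Turing configuration `c`: instruction pointer
`13 i` for current state `q_i`, head on the left symbol of the encoded read symbol
(which must already be marked), tape encoded as in `EncTape`. -/
def Encodes (wc : WCfg) (c : TMCfg) : Prop :=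
  wc.ip = 13 * c.q ∧ wc.pos = 2 * c.pos ∧ wc.tape (2 * c.pos) = true ∧
    EncTape c.tape wc.tape

/-!
The block of `W_N` at address `13 i` simulates one step of `N` in state `q_i`: the head steps onto
the right cell of the current pair, which holds the Turing symbol, and the jump there selects
`⟨TR_{q_i,0}⟩` or `⟨TR_{q_i,1}⟩`. Each is straight-line code (mark the right cell if a 1 is
written, move to the left cell of the neighbouring pair and mark it, turning a blank `00` into
`10`) followed by a jump to `13 j` that is always taken, since the cell under the head has just
been marked. Marks are never undone, which is why `N` must be non-erasing. Hence each step of `N`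
costs at most 8 steps of `W_N`, and the final `M` halts `W_N` in one more step.
-/

open Function

namespace WInstr

def exec : WInstr → ℤ × (ℤ → Bool) → ℤ × (ℤ → Bool)
  | L, (x, w) => (x - 1, w)
  | R, (x, w) => (x + 1, w)
  | M, (x, w) => (x, update w x true)
  | J _, s => s

end WInstr

namespace List

variable {α : Type*} {l : List α} {i : ℕ}

lemma getElem?_eq_of_cons_prefix_drop {a : α} {l₁ : List α} (h : a :: l₁ <+: l.drop i) :
    l[i]? = some a := by
  obtain ⟨rest, hrest⟩ := h
  have h0 : (l.drop i)[0]? = some a := by rw [← hrest]; rfl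
  simpa using h0

lemma prefix_drop_add_of_append_prefix_drop {l₁ l₂ : List α} (h : l₁ ++ l₂ <+: l.drop i) :
    l₂ <+: l.drop (i + l₁.length) := by
  obtain ⟨rest, hrest⟩ := h
  exact ⟨rest, by rw [← drop_drop, ← hrest, append_assoc, drop_left]⟩

end List

section Execution

variable {P : List WInstr} {i : ℕ}

lemma wStep_of_getElem?_eq_J {x : ℕ} (h : P[i]? = some (.J x)) (p : ℤ) (w : ℤ → Bool) :
    wStep P ⟨i, p, w⟩ = if w p then ⟨x, p, w⟩ else ⟨i + 1, p, w⟩ := by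
  simp [wStep, h]

lemma wStep_of_getElem?_eq {ι : WInstr} (h : P[i]? = some ι) (hι : ∀ x, ι ≠ .J x)
    (p : ℤ) (w : ℤ → Bool) :
    wStep P ⟨i, p, w⟩ = ⟨i + 1, (ι.exec (p, w)).1, (ι.exec (p, w)).2⟩ := by
  cases ι with
  | J x => exact absurd rfl (hι x)
  | _ => simp [wStep, h, WInstr.exec]

lemma iterate_wStep_of_prefix_drop {code : List WInstr} (h : code <+: P.drop i)
    (hcode : ∀ x, .J x ∉ code) (p : ℤ) (w : ℤ → Bool) :
    (wStep P)^[code.length] ⟨i, p, w⟩ =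
      ⟨i + code.length, (code.foldl (fun s ι => ι.exec s) (p, w)).1,
        (code.foldl (fun s ι => ι.exec s) (p, w)).2⟩ := by
  induction code generalizing i p w with
  | nil => rfl
  | cons ι code ih =>
    have hι : ∀ x, ι ≠ .J x := fun x hx => hcode x (hx ▸ List.mem_cons_self ..)
    have hrest : code <+: P.drop (i + 1) :=
      List.prefix_drop_add_of_append_prefix_drop (l₁ := [ι]) h
    rw [List.length_cons, iterate_succ_apply,
      wStep_of_getElem?_eq (List.getElem?_eq_of_cons_prefix_drop h) hι,
      ih hrest (fun x hx => hcode x (List.mem_cons_of_mem _ hx))]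
    simp only [List.foldl_cons]
    congr 1
    omega

lemma iterate_wStep_of_prefix_drop_of_jump {code : List WInstr} {x : ℕ}
    (h : code ++ [.J x] <+: P.drop i) (hcode : ∀ y, .J y ∉ code)
    {p p' : ℤ} {w w' : ℤ → Bool}
    (hrun : code.foldl (fun s ι => ι.exec s) (p, w) = (p', w')) (hmark : w' p' = true) :
    (wStep P)^[code.length + 1] ⟨i, p, w⟩ = ⟨x, p', w'⟩ := by
  rw [iterate_succ_apply', iterate_wStep_of_prefix_drop ((List.prefix_append _ _).trans h) hcode,
    hrun, wStep_of_getElem?_eq_J (List.getElem?_eq_of_cons_prefix_drop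
      (List.prefix_drop_add_of_append_prefix_drop h)), if_pos hmark]

end Execution

def moveHead (d : Bool) (p : ℤ) : ℤ := if d then p + 1 else p - 1

lemma tmStep_of_eq_some {f : ℕ → Bool → Option (Bool × Bool × ℕ)} {c : TMCfg}
    {b d : Bool} {q' : ℕ} (h : f c.q (c.tape c.pos) = some (b, d, q')) :
    tmStep f c = ⟨q', moveHead d c.pos, update c.tape c.pos b⟩ := by
  simp [tmStep, h, moveHead]

section Rules

variable {P : List WInstr} {i : ℕ} {b d : Bool} {j : ℕ}

lemma iterate_wStep_encTR1 (h : encTR1 (some (b, d, j)) <+: P.drop i) (p : ℤ) (w : ℤ → Bool) :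
    (wStep P)^[5] ⟨i, 2 * p + 1, w⟩ =
      ⟨13 * j, 2 * moveHead d p, update w (2 * moveHead d p) true⟩ := by
  cases d
  · exact iterate_wStep_of_prefix_drop_of_jump (code := [.L, .L, .L, .M]) h (by simp)
      (by simp [WInstr.exec, moveHead, mul_sub, sub_sub]) (update_self ..)
  · exact iterate_wStep_of_prefix_drop_of_jump (code := [.R, .M, .M, .M]) h (by simp)
      (by simp [WInstr.exec, moveHead, mul_add, add_assoc]) (update_self ..)

lemma iterate_wStep_encTR0 (h : encTR0 (some (b, d, j)) <+: P.drop i) (p : ℤ) (w : ℤ → Bool) :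
    (wStep P)^[6] ⟨i, 2 * p + 1, w⟩ =
      ⟨13 * j, 2 * moveHead d p,
        update (if b then update w (2 * p + 1) true else w) (2 * moveHead d p) true⟩ := by
  cases b <;> cases d
  · exact iterate_wStep_of_prefix_drop_of_jump (code := [.L, .L, .L, .M, .M]) h (by simp)
      (by simp [WInstr.exec, moveHead, mul_sub, sub_sub]) (update_self ..)
  · exact iterate_wStep_of_prefix_drop_of_jump (code := [.R, .M, .M, .M, .M]) h (by simp)
      (by simp [WInstr.exec, moveHead, mul_add, add_assoc]) (update_self ..)
  · exact iterate_wStep_of_prefix_drop_of_jump (code := [.M, .L, .L, .L, .M]) h (by simp)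
      (by simp [WInstr.exec, moveHead, mul_sub, sub_sub]) (update_self ..)
  · exact iterate_wStep_of_prefix_drop_of_jump (code := [.M, .R, .M, .M, .M]) h (by simp)
      (by simp [WInstr.exec, moveHead, mul_add, add_assoc]) (update_self ..)

end Rules

section Layout

variable (f : ℕ → Bool → Option (Bool × Bool × ℕ))

def wangBlock (i : ℕ) : List WInstr :=
  [.R, .J (13 * i + 8)] ++ encTR0 (f i false) ++ encTR1 (f i true)

lemma length_encTR0 (r : Option (Bool × Bool × ℕ)) : (encTR0 r).length = 6 := by
  rcases r with _ | ⟨_ | _, _ | _, _⟩ <;> rfl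

lemma length_encTR1 (r : Option (Bool × Bool × ℕ)) : (encTR1 r).length = 5 := by
  rcases r with _ | ⟨_, _ | _, _⟩ <;> rfl

lemma length_wangBlock (i : ℕ) : (wangBlock f i).length = 13 := by
  simp [wangBlock, length_encTR0, length_encTR1]

lemma length_flatten_map_wangBlock (n : ℕ) :
    (((List.range n).map (wangBlock f)).flatten).length = 13 * n := by
  simp [List.length_flatten, Function.comp_def, length_wangBlock, mul_comm]

lemma wangOf_eq (m : ℕ) : wangOf m f = ((List.range (m - 1)).map (wangBlock f)).flatten ++ [.M] :=
  rfl

lemma length_wangOf (m : ℕ) : (wangOf m f).length = 13 * (m - 1) + 1 := by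
  rw [wangOf_eq, List.length_append, length_flatten_map_wangBlock, List.length_singleton]

lemma getElem?_wangOf_halt (m : ℕ) : (wangOf m f)[13 * (m - 1)]? = some .M := by
  rw [wangOf_eq, List.getElem?_append_right (by rw [length_flatten_map_wangBlock]),
    length_flatten_map_wangBlock, Nat.sub_self, List.getElem?_cons_zero]

lemma wangBlock_prefix_drop_wangOf {m q : ℕ} (hq : q < m - 1) :
    wangBlock f q <+: (wangOf m f).drop (13 * q) := by
  obtain ⟨n, hn⟩ : ∃ n, m - 1 = q + (n + 1) := ⟨m - 1 - q - 1, by omega⟩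
  rw [wangOf_eq, hn, List.range_add, List.range_succ_eq_map]
  simp only [List.map_append, List.map_cons, List.map_map, List.flatten_append, List.flatten_cons,
    List.append_assoc, Nat.add_zero]
  rw [List.drop_left' (length_flatten_map_wangBlock f q)]
  exact List.prefix_append _ _

lemma encTR0_prefix_drop_wangOf {m q : ℕ} (hq : q < m - 1) :
    encTR0 (f q false) <+: (wangOf m f).drop (13 * q + 2) :=
  List.prefix_drop_add_of_append_prefix_drop (l₁ := [WInstr.R, .J _])
    ((List.prefix_append _ _).trans (wangBlock_prefix_drop_wangOf f hq))

lemma encTR1_prefix_drop_wangOf {m q : ℕ} (hq : q < m - 1) :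
    encTR1 (f q true) <+: (wangOf m f).drop (13 * q + 8) := by
  have h := List.prefix_drop_add_of_append_prefix_drop (wangBlock_prefix_drop_wangOf f hq)
  rwa [List.length_append, length_encTR0] at h

lemma iterate_two_wStep_wangOf {m q : ℕ} (hq : q < m - 1) (p : ℤ) (w : ℤ → Bool) :
    (wStep (wangOf m f))^[2] ⟨13 * q, 2 * p, w⟩ =
      if w (2 * p + 1) then ⟨13 * q + 8, 2 * p + 1, w⟩ else ⟨13 * q + 2, 2 * p + 1, w⟩ := by
  have hblock := wangBlock_prefix_drop_wangOf f hq
  rw [iterate_succ_apply, iterate_one,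
    wStep_of_getElem?_eq (List.getElem?_eq_of_cons_prefix_drop hblock) (by simp)]
  exact wStep_of_getElem?_eq_J (List.getElem?_eq_of_cons_prefix_drop
    (List.prefix_drop_add_of_append_prefix_drop (l₁ := [WInstr.R]) hblock)) _ _

end Layout

namespace EncTape

variable {t w : ℤ → Bool}

lemma update_left (h : EncTape t w) (k : ℤ) : EncTape t (update w (2 * k) true) := by
  intro k'
  rcases eq_or_ne k' k with rfl | hne
  · left
    refine ⟨update_self .., ?_⟩
    rw [update_of_ne (by omega)]
    rcases h k' with ⟨_, h2⟩ | ⟨_, h2, h3⟩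
    · exact h2
    · rw [h2, h3]
  · rw [update_of_ne (by omega), update_of_ne (by omega)]
    exact h k'

lemma write (h : EncTape t w) {k : ℤ} (hk : w (2 * k) = true) {b : Bool}
    (hb : t k = true → b = true) :
    EncTape (update t k b) (if b then update w (2 * k + 1) true else w) := by
  cases b
  · have htk : update t k false = t := update_eq_self_iff.mpr (by simpa using mt hb)
    simpa [htk] using h
  · intro k'
    rw [if_pos rfl]
    rcases eq_or_ne k' k with rfl | hne
    · exact .inl ⟨by rwa [update_of_ne (by omega)], by simp⟩
    · rw [update_of_ne hne, update_of_ne (by omega), update_of_ne (by omega)]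
      exact h k'

end EncTape

section Simulation

variable {m : ℕ} {f : ℕ → Bool → Option (Bool × Bool × ℕ)}

lemma tmStep_of_tmHalted {c : TMCfg} (h : TMHalted f c) : tmStep f c = c := by
  simp [tmStep, show f c.q (c.tape c.pos) = none from h]

lemma exists_iterate_wStep_encodes_tmStep (hf : NonErasing f) {c : TMCfg} {wc : WCfg}
    {b d : Bool} {j : ℕ} (hq : c.q < m - 1) (hr : f c.q (c.tape c.pos) = some (b, d, j))
    (h : Encodes wc c) :
    ∃ s ≤ 8, Encodes ((wStep (wangOf m f))^[s] wc) (tmStep f c) := by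
  obtain ⟨q, p, t⟩ := c
  obtain ⟨ip, pos, w⟩ := wc
  obtain ⟨rfl, rfl, hmark, henc⟩ :
    ip = 13 * q ∧ pos = 2 * p ∧ w (2 * p) = true ∧ EncTape t w := h
  dsimp only at hq hr
  rw [tmStep_of_eq_some hr]
  have hright : w (2 * p + 1) = t p := by
    rcases henc p with ⟨-, h⟩ | ⟨h, -⟩
    exacts [h, absurd hmark (by simp [h])]
  have h2 := iterate_two_wStep_wangOf f hq p w
  rw [hright] at h2
  cases htp : t p
  · rw [htp] at hr
    have h0 := encTR0_prefix_drop_wangOf f hq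
    rw [hr] at h0
    refine ⟨6 + 2, le_rfl, ?_⟩
    rw [iterate_add_apply, h2, htp, if_neg Bool.false_ne_true, iterate_wStep_encTR0 h0]
    exact ⟨rfl, rfl, update_self .., (henc.write hmark (by simp [htp])).update_left _⟩
  · rw [htp] at hr
    obtain rfl : b = true := by
      cases b
      exacts [absurd hr (hf q d j), rfl]
    have h1 := encTR1_prefix_drop_wangOf f hq
    rw [hr] at h1
    refine ⟨5 + 2, by norm_num, ?_⟩
    rw [iterate_add_apply, h2, htp, if_pos rfl,
      iterate_wStep_encTR1 h1, show update t p true = t from htp ▸ update_eq_self p t]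
    exact ⟨rfl, rfl, update_self .., henc.update_left _⟩

lemma wStep_wangOf_of_encodes_halt {c : TMCfg} {wc : WCfg} (hc : c.q = m - 1) (h : Encodes wc c) :
    (wStep (wangOf m f) wc).ip = (wangOf m f).length ∧
      EncTape c.tape (wStep (wangOf m f) wc).tape := by
  obtain ⟨q, p, t⟩ := c
  obtain ⟨ip, pos, w⟩ := wc
  obtain ⟨rfl, rfl, -, henc⟩ :
    ip = 13 * q ∧ pos = 2 * p ∧ w (2 * p) = true ∧ EncTape t w := h
  dsimp only at hc
  subst hc
  rw [wStep_of_getElem?_eq (getElem?_wangOf_halt f m) (by simp), length_wangOf]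
  exact ⟨rfl, henc.update_left p⟩

lemma exists_iterate_wStep_halt (hf : NonErasing f)
    (hhalt : ∀ q r, q < m → (f q r = none ↔ q = m - 1))
    (hvalid : ∀ q r w d q', q < m → f q r = some (w, d, q') → q' < m) {t : ℕ} {c : TMCfg}
    {wc : WCfg} (hq : c.q < m) (h : Encodes wc c) (hH : TMHalted f ((tmStep f)^[t] c)) :
    ∃ s ≤ 8 * t + 1, ((wStep (wangOf m f))^[s] wc).ip = (wangOf m f).length ∧
      EncTape ((tmStep f)^[t] c).tape ((wStep (wangOf m f))^[s] wc).tape := by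
  induction t generalizing c wc with
  | zero => exact ⟨1, by omega, wStep_wangOf_of_encodes_halt ((hhalt _ _ hq).mp hH) h⟩
  | succ t ih =>
    by_cases hc : TMHalted f c
    · rw [iterate_fixed (tmStep_of_tmHalted hc)]
      exact ⟨1, by omega, wStep_wangOf_of_encodes_halt ((hhalt _ _ hq).mp hc) h⟩
    obtain ⟨b, d, j, hr⟩ : ∃ b d j, f c.q (c.tape c.pos) = some (b, d, j) := by
      rcases hr : f c.q (c.tape c.pos) with _ | ⟨b, d, j⟩
      exacts [absurd hr hc, ⟨b, d, j, rfl⟩]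
    have hq' : c.q < m - 1 := by
      have := mt (hhalt _ _ hq).mpr hc
      omega
    obtain ⟨s₀, hs₀, h'⟩ := exists_iterate_wStep_encodes_tmStep hf hq' hr h
    have hj : (tmStep f c).q < m := by
      rw [tmStep_of_eq_some hr]
      exact hvalid _ _ _ _ _ hq hr
    rw [iterate_succ_apply] at hH ⊢
    obtain ⟨s, hs, hsim⟩ := ih hj h' hH
    refine ⟨s + s₀, by omega, ?_⟩
    rwa [iterate_add_apply]

end Simulation

theorem stmt6_general (m : ℕ) (f : ℕ → Bool → Option (Bool × Bool × ℕ))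
    (hf : NonErasing f)
    (hhalt : ∀ q r, q < m → (f q r = none ↔ q = m - 1))
    (hvalid : ∀ q r w d q', q < m → f q r = some (w, d, q') → q' < m) :
    ∃ c : ℕ, ∀ (cfg : TMCfg) (t : ℕ) (wc : WCfg), cfg.q < m → Encodes wc cfg →
      TMHalted f ((tmStep f)^[t] cfg) →
      ∃ s ≤ c * t + c,
        ((wStep (wangOf m f))^[s] wc).ip = (wangOf m f).length ∧
        EncTape ((tmStep f)^[t] cfg).tape (((wStep (wangOf m f))^[s] wc).tape) := by
  refine ⟨8, fun cfg t wc hq henc hH => ?_⟩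
  obtain ⟨s, hs, hsim⟩ := exists_iterate_wStep_halt hf hhalt hvalid hq henc hH
  exact ⟨s, by omega, hsim⟩

/-- If the non-erasing machine `N` halts in time `t`, then the Wang B machine `W_N`,
started from the encoding of the initial configuration, halts (its instruction pointer
passes beyond the last instruction) within `c·t + c` steps, for a constant `c`
depending only on `N`, with final tape encoding `N`'s final tape contents. -/
theorem stmt6 (m : ℕ) (hm : 1 ≤ m) (f : ℕ → Bool → Option (Bool × Bool × ℕ))
    (hf : NonErasing f)
    (hhalt : ∀ q r, q < m → (f q r = none ↔ q = m - 1))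
    (hvalid : ∀ q r w d q', q < m → f q r = some (w, d, q') → q' < m) :
    ∃ c : ℕ, ∀ (cfg : TMCfg) (t : ℕ) (wc : WCfg), cfg.q < m → Encodes wc cfg →
      TMHalted f ((tmStep f)^[t] cfg) →
      ∃ s ≤ c * t + c,
        ((wStep (wangOf m f))^[s] wc).ip = (wangOf m f).length ∧
        EncTape ((tmStep f)^[t] cfg).tape (((wStep (wangOf m f))^[s] wc).tape) :=
  stmt6_general m f hf hhalt hvalid
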